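/- Let A be a symmetric convex body in ℝ^m. Then for any 0 < ε < 1 one has |{x ∈ A : ‖x‖₂ ≥ ε R(A)}| ≥ (1/2)(1−ε)^m |A|, where R(A) = max{‖x‖₂ : x ∈ A} and |·| denotes m-dimensional Lebesgue measure. -/

import Mathlib

open MeasureTheory Real
open scoped ENNReal Pointwise RealInnerProductSpace

noncomputable section

/-- `ℝⁿ` with its Euclidean structure. -/
abbrev En (n : ℕ) : Type := EuclideanSpace ℝ (Fin n)

/-- The orthogonal group `O(n)`. -/
abbrev OG (n : ℕ) := Matrix.orthogonalGroup (Fin n) ℝ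

/-- The linear action of an `n × n` matrix on `ℝⁿ`. -/
def matLin (n : ℕ) (U : Matrix (Fin n) (Fin n) ℝ) : En n →ₗ[ℝ] En n where
  toFun x := WithLp.toLp 2 (U.mulVec x)
  map_add' x y := by simp [Matrix.mulVec_add]
  map_smul' c x := by simp [Matrix.mulVec_smul]

/-- The radius `R(A) = sup {‖x‖₂ : x ∈ A}` of a set. -/
def radius {E : Type*} [NormedAddCommGroup E] (A : Set E) : ℝ := sSup (norm '' A)

/-- `K` is symmetric, i.e. `K = -K`. -/
def IsSymmetricSet {E : Type*} [AddGroup E] (K : Set E) : Prop := ∀ x ∈ K, -x ∈ K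

/-- `K` is an isotropic convex body in `ℝⁿ` with isotropic constant `L`:
it is a convex body of volume `1`, its center of mass is at the origin, and
`∫_K ⟨x,θ⟩² dx = L²` for every unit vector `θ`. -/
def IsIsotropicBody (n : ℕ) (K : Set (En n)) (L : ℝ) : Prop :=
  IsCompact K ∧ Convex ℝ K ∧ (interior K).Nonempty ∧
  volume K = 1 ∧ 0 < L ∧
  (∀ θ : En n, ∫ x in K, ⟪x, θ⟫ = (0:ℝ)) ∧
  (∀ θ : En n, ‖θ‖ = 1 → ∫ x in K, ⟪x, θ⟫ ^ 2 = L ^ 2)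

/-- `Lₙ′`: the maximal isotropic constant over isotropic *symmetric* convex bodies in `ℝⁿ`. -/
def maxIsoConstSym (n : ℕ) : ℝ :=
  sSup {L : ℝ | ∃ K : Set (En n), IsIsotropicBody n K L ∧ IsSymmetricSet K}

/-- `Lₙ`: the maximal isotropic constant over isotropic convex bodies in `ℝⁿ`. -/
def maxIsoConst (n : ℕ) : ℝ :=
  sSup {L : ℝ | ∃ K : Set (En n), IsIsotropicBody n K L}

/-- A measure `μ` is log-concave if `μ(λA + (1-λ)B) ≥ μ(A)^λ μ(B)^{1-λ}` for all
compact `A, B` and `λ ∈ (0,1)`. -/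
def IsLogConcave (n : ℕ) (μ : Measure (En n)) : Prop :=
  ∀ A B : Set (En n), IsCompact A → IsCompact B → ∀ l : ℝ, 0 < l → l < 1 →
    μ A ^ l * μ B ^ (1 - l) ≤ μ (l • A + (1 - l) • B)

/-- A probability measure `μ` is isotropic: centered with identity covariance. -/
def IsIsotropicMeasure (n : ℕ) (μ : Measure (En n)) : Prop :=
  IsProbabilityMeasure μ ∧
  (∀ θ : En n, ∫ x, ⟪x, θ⟫ ∂μ = (0:ℝ)) ∧
  (∀ θ : En n, ‖θ‖ = 1 → ∫ x, ⟪x, θ⟫ ^ 2 ∂μ = 1)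

/-- The `L_q`-centroid body `Z_q(μ)` of a measure `μ`: the convex body with support
function `h(y) = (∫ |⟨x,y⟩|^q dμ(x))^{1/q}`. -/
def centroidBody (n : ℕ) (μ : Measure (En n)) (q : ℝ) : Set (En n) :=
  {x | ∀ y : En n, ⟪x, y⟫ ≤ (∫ z, |⟪z, y⟫| ^ q ∂μ) ^ (1 / q)}

/-- The `L_q`-centroid body `Z_q(K)` of an isotropic convex body `K`. -/
def centroidBodyK (n : ℕ) (K : Set (En n)) (q : ℝ) : Set (En n) :=
  {x | ∀ y : En n, ⟪x, y⟫ ≤ (∫ z in K, |⟪z, y⟫| ^ q) ^ (1 / q)}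

/-- The polar body `A° = {y : ⟨x,y⟩ ≤ 1 for all x ∈ A}`. -/
def polarBody (n : ℕ) (A : Set (En n)) : Set (En n) :=
  {y | ∀ x ∈ A, ⟪x, y⟫ ≤ 1}

/-- The `ψ₂`-norm `‖⟨·,θ⟩‖_{L_{ψ₂}(K)} = inf {t > 0 : ∫_K exp((|⟨x,θ⟩|/t)²) dx ≤ 2}`. -/
def psi2Norm (n : ℕ) (K : Set (En n)) (θ : En n) : ℝ :=
  sInf {t : ℝ | 0 < t ∧ ∫ x in K, Real.exp ((|⟪x, θ⟫| / t) ^ 2) ≤ 2}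

/-- The volume radius of a subset `B` of a subspace `E`, relative to the unit ball of `E`. -/
def vrad {n : ℕ} (E : Submodule ℝ (En n)) (B : Set ↥E) : ℝ :=
  ((volume B).toReal / (volume (Metric.closedBall (0 : ↥E) 1)).toReal) ^
    (1 / (Module.finrank ℝ E : ℝ))

/-- `w_t(A) = sup {vrad(A ∩ E) : E ∈ G_{n,t}}`. -/
def wt (n t : ℕ) (A : Set (En n)) : ℝ :=
  sSup {r | ∃ E : Submodule ℝ (En n), Module.finrank ℝ E = t ∧
    r = vrad E {x : ↥E | (x : En n) ∈ A}}

/-- `v_t(A) = sup {vrad(P_E(A)) : E ∈ G_{n,t}}`. -/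
def vt (n t : ℕ) (A : Set (En n)) : ℝ :=
  sSup {r | ∃ E : Submodule ℝ (En n), Module.finrank ℝ E = t ∧
    r = vrad E (⇑(E.orthogonalProjectionOnto) '' A)}

/-- The isotropic constant of a convex body `A ⊆ ℝᵐ`, via the minimization
characterization `m·L_A² = min over affine positions of (∫_B ‖x‖² dx) / |B|^{1+2/m}`. -/
def isoConstBody (m : ℕ) (A : Set (En m)) : ℝ :=
  Real.sqrt ((1 / (m : ℝ)) * sInf {r : ℝ |
    ∃ (T : En m ≃ₗ[ℝ] En m) (a : En m),
      r = (∫ x in (fun y => T y + a) '' A, ‖x‖ ^ 2) /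
          ((volume ((fun y => T y + a) '' A)).toReal ^ (1 + 2 / (m : ℝ)))})


/-!
Take `x₀ ∈ A` of maximal norm `R`. By symmetry the half `P = {a ∈ A | 0 ≤ ⟪a, x₀⟫}` carries at
least half the volume of `A`. The homothety with centre `x₀` and ratio `1 - ε` maps `P` into `A`
by convexity, and the image point `ε x₀ + (1 - ε) a` is `ε x₀` plus a vector having nonnegative
inner product with it, so its norm is at least `ε R`. The image has volume `(1 - ε)^m |P|`.
-/

open AffineMap

theorem radius_eq_norm_of_isMaxOn {E : Type*} [NormedAddCommGroup E] {A : Set E} {x₀ : E}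
    (hx₀ : x₀ ∈ A) (hmax : IsMaxOn norm A x₀) : radius A = ‖x₀‖ :=
  IsGreatest.csSup_eq ⟨Set.mem_image_of_mem _ hx₀, Set.forall_mem_image.2 fun _ ha => hmax ha⟩

section InnerProductSpace

variable {E : Type*} [NormedAddCommGroup E] [InnerProductSpace ℝ E]

theorem norm_le_norm_add_of_inner_nonneg {x y : E} (h : 0 ≤ ⟪x, y⟫) : ‖x‖ ≤ ‖x + y‖ := by
  refine le_of_sq_le_sq ?_ (norm_nonneg _)
  rw [norm_add_sq_real]
  nlinarith [sq_nonneg ‖y‖]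

theorem measure_le_two_mul_measure_inner_nonneg [MeasurableSpace E] [BorelSpace E] (μ : Measure E)
    [μ.IsNegInvariant] {A : Set E} (hA : IsSymmetricSet A) (v : E) :
    μ A ≤ 2 * μ {a ∈ A | 0 ≤ ⟪a, v⟫} := by
  set P := {a ∈ A | 0 ≤ ⟪a, v⟫}
  have hcover : A ⊆ P ∪ -P := by
    intro a ha
    rcases le_or_gt 0 ⟪a, v⟫ with h | h
    · exact Or.inl ⟨ha, h⟩
    · exact Or.inr ⟨hA a ha, by rw [inner_neg_left]; linarith⟩
  calc μ A ≤ μ (P ∪ -P) := measure_mono hcover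
    _ ≤ μ P + μ (-P) := measure_union_le _ _
    _ = 2 * μ P := by rw [Measure.measure_neg, two_mul]

theorem mul_norm_le_norm_homothety {x a : E} (ha : 0 ≤ ⟪a, x⟫) {t : ℝ} (ht₀ : 0 ≤ t)
    (ht₁ : t ≤ 1) : (1 - t) * ‖x‖ ≤ ‖homothety x t a‖ := by
  rw [homothety_eq_lineMap, lineMap_apply_module, ← norm_smul_of_nonneg (by linarith)]
  refine norm_le_norm_add_of_inner_nonneg ?_
  rw [real_inner_smul_left, real_inner_smul_right, real_inner_comm]
  positivity

end InnerProductSpace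

theorem statement8_general (m : ℕ) (A : Set (En m))
    (hcomp : IsCompact A) (hconv : Convex ℝ A)
    (hsym : IsSymmetricSet A) (ε : ℝ) (hε0 : 0 < ε) (hε1 : ε < 1) :
    ENNReal.ofReal ((1 / 2) * (1 - ε) ^ m) * volume A ≤
      volume {x ∈ A | ε * radius A ≤ ‖x‖} := by
  rcases A.eq_empty_or_nonempty with rfl | hne
  · simp
  obtain ⟨x₀, hx₀, hmax⟩ := hcomp.exists_isMaxOn hne continuous_norm.continuousOn
  set P := {a ∈ A | 0 ≤ ⟪a, x₀⟫}
  have hP : volume A ≤ 2 * volume P := measure_le_two_mul_measure_inner_nonneg volume hsym x₀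
  have hPvol : volume (homothety x₀ (1 - ε) '' P) = ENNReal.ofReal ((1 - ε) ^ m) * volume P := by
    rw [Measure.addHaar_image_homothety, finrank_euclideanSpace_fin,
      abs_of_nonneg (pow_nonneg (by linarith) _)]
  have himage : homothety x₀ (1 - ε) '' P ⊆ {x ∈ A | ε * radius A ≤ ‖x‖} := by
    rintro _ ⟨a, ⟨ha, hax⟩, rfl⟩
    refine ⟨?_, ?_⟩
    · rw [homothety_eq_lineMap]
      exact hconv.lineMap_mem hx₀ ha ⟨by linarith, by linarith⟩
    · simpa [radius_eq_norm_of_isMaxOn hx₀ hmax] using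
        mul_norm_le_norm_homothety hax (t := 1 - ε) (by linarith) (by linarith)
  calc ENNReal.ofReal ((1 / 2) * (1 - ε) ^ m) * volume A
      ≤ ENNReal.ofReal ((1 / 2) * (1 - ε) ^ m) * (2 * volume P) := by gcongr
    _ = ENNReal.ofReal ((1 - ε) ^ m) * volume P := by
      rw [← mul_assoc]
      congr 1
      rw [← ENNReal.ofReal_ofNat 2, ← ENNReal.ofReal_mul (by positivity)]
      ring_nf
    _ = volume (homothety x₀ (1 - ε) '' P) := hPvol.symm
    _ ≤ _ := measure_mono himage

/-- **Klartag's lemma.** Let `A` be a symmetric convex body in `ℝᵐ`.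
Then for any `0 < ε < 1`,
`|{x ∈ A : ‖x‖₂ ≥ ε R(A)}| ≥ (1/2)(1-ε)^m |A|`. -/
theorem statement8 (m : ℕ) (A : Set (En m))
    (hcomp : IsCompact A) (hconv : Convex ℝ A) (hint : (interior A).Nonempty)
    (hsym : IsSymmetricSet A) (ε : ℝ) (hε0 : 0 < ε) (hε1 : ε < 1) :
    ENNReal.ofReal ((1 / 2) * (1 - ε) ^ m) * volume A ≤
      volume {x ∈ A | ε * radius A ≤ ‖x‖} :=
  statement8_general m A hcomp hconv hsym ε hε0 hε1
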